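/- Define the error function E(z) = 2∫_0^z e^{-πu²} du and the complementary function β(z) = ∫_z^∞ u^{-1/2} e^{-πu} du for z > 0. Then for all nonzero real z, E(z) = sgn(z) - sgn(z)·β(z²). -/

import Mathlib

open Real MeasureTheory

/-- The error function `E(z) = 2 ∫₀^z e^{-πu²} du`. -/
noncomputable def errE (z : ℝ) : ℝ := 2 * ∫ u in (0 : ℝ)..z, Real.exp (-π * u ^ 2)

/-- The complementary function `β(z) = ∫_z^∞ u^{-1/2} e^{-πu} du`. -/
noncomputable def betaComp (z : ℝ) : ℝ :=
  ∫ u in Set.Ioi z, u ^ (-(1 : ℝ) / 2) * Real.exp (-π * u)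

/-!
For `a ≥ 0` the substitution `u = t²` turns `β(a²)` into `2 ∫_a^∞ e^{-πt²} dt`, so
`E(a) + β(a²) = 2 ∫_0^∞ e^{-πt²} dt = 1` by the Gaussian integral. Negative `z` reduce to this
because `E` is odd.
-/

open Set

lemma image_sq_Ioi {a : ℝ} (ha : 0 ≤ a) : (fun t : ℝ => t ^ 2) '' Ioi a = Ioi (a ^ 2) := by
  ext y
  constructor
  · rintro ⟨t, ht, rfl⟩
    exact pow_lt_pow_left₀ ht ha two_ne_zero
  · intro hy
    have hy0 : 0 ≤ y := (sq_nonneg a).trans hy.out.le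
    exact ⟨√y, (lt_sqrt ha).2 hy, sq_sqrt hy0⟩

lemma betaComp_sq {a : ℝ} (ha : 0 ≤ a) :
    betaComp (a ^ 2) = 2 * ∫ t in Ioi a, exp (-π * t ^ 2) := by
  rw [betaComp, ← image_sq_Ioi ha, integral_image_eq_integral_abs_deriv_smul measurableSet_Ioi
    (fun t _ => (hasDerivAt_pow 2 t).hasDerivWithinAt)
    ((pow_left_strictMonoOn₀ two_ne_zero).mono fun t ht => ha.trans ht.out.le).injOn,
    ← integral_const_mul]
  refine setIntegral_congr_fun measurableSet_Ioi fun t ht => ?_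
  have ht0 : 0 < t := ha.trans_lt ht
  have hpow : (t ^ 2) ^ (-(1 : ℝ) / 2) = t⁻¹ := by
    rw [neg_div, rpow_neg (sq_nonneg t), ← sqrt_eq_rpow, sqrt_sq ht0.le]
  rw [smul_eq_mul, hpow, abs_of_pos (by positivity)]
  field_simp
  ring

lemma errE_add_betaComp_sq {a : ℝ} (ha : 0 ≤ a) : errE a + betaComp (a ^ 2) = 1 := by
  have hgauss : Integrable fun t : ℝ => exp (-π * t ^ 2) := integrable_exp_neg_mul_sq pi_pos
  rw [errE, betaComp_sq ha, ← mul_add, intervalIntegral.integral_interval_add_Ioi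
    hgauss.integrableOn hgauss.integrableOn, integral_gaussian_Ioi, div_self pi_pos.ne', sqrt_one]
  norm_num

lemma errE_neg (z : ℝ) : errE (-z) = -errE z := by
  simp only [errE]
  rw [← neg_zero, ← intervalIntegral.integral_comp_neg]
  simp [intervalIntegral.integral_symm z 0]

theorem errE_eq_sign_sub_sign_mul_beta_general (z : ℝ) :
    errE z = Real.sign z - Real.sign z * betaComp (z ^ 2) := by
  rcases lt_trichotomy z 0 with hz | rfl | hz
  · have h := errE_add_betaComp_sq (neg_nonneg.2 hz.le)
    rw [errE_neg, neg_sq] at h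
    rw [sign_of_neg hz]
    linarith
  · simp [errE]
  · have h := errE_add_betaComp_sq hz.le
    rw [sign_of_pos hz]
    linarith

/-- For all nonzero real `z`, `E(z) = sgn(z) - sgn(z) β(z²)`. -/
theorem errE_eq_sign_sub_sign_mul_beta (z : ℝ) (hz : z ≠ 0) :
    errE z = Real.sign z - Real.sign z * betaComp (z ^ 2) :=
  errE_eq_sign_sub_sign_mul_beta_general z
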